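/- For b = 2 and every N ≥ 2, the minimal gap of the base-2 van der Corput sequence satisfies 1/(2N) ≤ δ_min((g_2(n)), N) ≤ 1/N. -/

import Mathlib

/-- Distance from `x : ℝ` to the nearest integer. -/
noncomputable def nid (x : ℝ) : ℝ := |x - round x|

/-- Minimal gap of a real sequence among indices `1 ≤ m ≠ n ≤ N`,
measured by the distance to the nearest integer of the difference. -/
noncomputable def minGap (x : ℕ → ℝ) (N : ℕ) : ℝ :=
  sInf {r | ∃ m n, 1 ≤ m ∧ m ≤ N ∧ 1 ≤ n ∧ n ≤ N ∧ m ≠ n ∧ r = nid (x n - x m)}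

/-- The base-`b` van der Corput sequence: digit reversal of `n` into `[0,1)`.
The `i`-th base-`b` digit of `n` is `n / b ^ i % b`. -/
noncomputable def vdc (b n : ℕ) : ℝ :=
  ∑ i ∈ Finset.range n, ((n / b ^ i % b : ℕ) : ℝ) / (b : ℝ) ^ (i + 1)

lemma digit_zero' {n i : ℕ} (h : n < 2 ^ i) : n / 2 ^ i % 2 = 0 := by
  simp [Nat.div_eq_of_lt h]

lemma vdc_eq_sum (n M : ℕ) (h : n < 2 ^ M) :
    vdc 2 n = ∑ i ∈ Finset.range M, ((n / 2 ^ i % 2 : ℕ) : ℝ) / (2 : ℝ) ^ (i + 1) := by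
  have hz : ∀ i, n < 2 ^ i → ((n / 2 ^ i % 2 : ℕ) : ℝ) / (2 : ℝ) ^ (i + 1) = 0 := by
    intro i hi; simp [digit_zero' hi]
  have key : ∀ K, n < 2 ^ K →
      (∑ i ∈ Finset.range K, ((n / 2 ^ i % 2 : ℕ) : ℝ) / (2 : ℝ) ^ (i + 1))
      = ∑ i ∈ Finset.range (max n M), ((n / 2 ^ i % 2 : ℕ) : ℝ) / (2 : ℝ) ^ (i + 1) := by
    intro K hK
    rcases le_total K (max n M) with hle | hle
    · exact Finset.sum_subset (Finset.range_subset_range.2 hle) (fun i _ hi => by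
        apply hz
        exact hK.trans_le (Nat.pow_le_pow_right (by norm_num) (le_of_not_gt (by simpa using hi))))
    · exact (Finset.sum_subset (Finset.range_subset_range.2 hle) (fun i _ hi => by
        apply hz
        have : n ≤ i := le_trans (le_max_left n M) (le_of_not_gt (by simpa using hi))
        exact lt_of_lt_of_le (Nat.lt_two_pow_self (n := n)) (Nat.pow_le_pow_right (by norm_num) this))).symm
  have h1 : vdc 2 n = ∑ i ∈ Finset.range (max n M), ((n / 2 ^ i % 2 : ℕ) : ℝ) / (2 : ℝ) ^ (i + 1) := by
    unfold vdc
    push_cast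
    exact key n (Nat.lt_two_pow_self (n := n))
  rw [h1, key M h]

lemma vdc_rec (n : ℕ) : vdc 2 n = (n % 2 : ℕ) / 2 + vdc 2 (n / 2) / 2 := by
  have h1 : n < 2 ^ (n + 1) := (Nat.lt_two_pow_self (n := n)).trans (Nat.pow_lt_pow_succ (by norm_num))
  have h2 : n / 2 < 2 ^ n := lt_of_le_of_lt (Nat.div_le_self n 2) (Nat.lt_two_pow_self (n := n))
  rw [vdc_eq_sum n (n + 1) h1, vdc_eq_sum (n / 2) n h2, Finset.sum_range_succ']
  have hd : ∀ i : ℕ, n / 2 ^ (i + 1) % 2 = (n / 2) / 2 ^ i % 2 := by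
    intro i; rw [Nat.div_div_eq_div_mul, pow_succ, mul_comm]
  simp only [hd, pow_zero, Nat.div_one]
  rw [Finset.sum_div, add_comm]
  congr 1
  · norm_num
  · apply Finset.sum_congr rfl
    intro i _
    rw [pow_succ]
    ring

lemma vdc_zero : vdc 2 0 = 0 := by simp [vdc]

lemma vdc_nonneg (n : ℕ) : 0 ≤ vdc 2 n := by
  apply Finset.sum_nonneg; intro i _; positivity

lemma vdc_repr (L : ℕ) : ∀ n, n < 2 ^ L → ∃ a : ℕ, a < 2 ^ L ∧ vdc 2 n = a / 2 ^ L := by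
  induction L with
  | zero =>
    intro n hn
    interval_cases n
    exact ⟨0, by norm_num, by simp [vdc_zero]⟩
  | succ L ih =>
    intro n hn
    have h2 : n / 2 < 2 ^ L := Nat.div_lt_of_lt_mul (by rw [← pow_succ']; exact hn)
    obtain ⟨c, hc, hvc⟩ := ih (n / 2) h2
    refine ⟨n % 2 * 2 ^ L + c, ?_, ?_⟩
    · have : n % 2 ≤ 1 := Nat.le_of_lt_succ (Nat.mod_lt n (by norm_num))
      calc n % 2 * 2 ^ L + c < n % 2 * 2 ^ L + 2 ^ L := by omega
        _ ≤ 1 * 2 ^ L + 2 ^ L := Nat.add_le_add_right (Nat.mul_le_mul_right _ this) _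
        _ = 2 ^ (L + 1) := by ring
    · rw [vdc_rec n, hvc]
      push_cast
      rw [pow_succ]
      field_simp

lemma vdc_lt_one (n : ℕ) : vdc 2 n < 1 := by
  obtain ⟨a, ha, hv⟩ := vdc_repr n n (Nat.lt_two_pow_self (n := n))
  rw [hv, div_lt_one (by positivity)]
  exact_mod_cast ha

lemma vdc_pos (n : ℕ) (hn : 0 < n) : 0 < vdc 2 n := by
  induction n using Nat.strong_induction_on with
  | _ n ih =>
    rw [vdc_rec n]
    rcases Nat.mod_two_eq_zero_or_one n with h | h
    · have h1 : 0 < n / 2 := by omega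
      have := vdc_nonneg (n / 2)
      rw [h]
      push_cast
      linarith [ih (n / 2) (Nat.div_lt_self hn (by norm_num)) h1]
    · rw [h]
      have := vdc_nonneg (n / 2)
      push_cast
      linarith

lemma vdc_injective : Function.Injective (vdc 2) := by
  intro n m h
  induction n using Nat.strong_induction_on generalizing m with
  | _ n ih =>
    rcases Nat.eq_zero_or_pos n with hn | hn
    · subst hn
      by_contra hm
      have : 0 < m := Nat.pos_of_ne_zero fun e => hm e.symm
      have := vdc_pos m this
      rw [← h, vdc_zero] at this
      exact lt_irrefl _ this
    rcases Nat.eq_zero_or_pos m with hm | hm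
    · subst hm
      have := vdc_pos n hn
      rw [h, vdc_zero] at this
      exact absurd this (lt_irrefl _)
    have hpar : n % 2 = m % 2 := by
      by_contra hp
      have key : ∀ a b : ℕ, a % 2 = 0 → b % 2 = 1 → vdc 2 a ≠ vdc 2 b := by
        intro a b ha hb
        have h1 := vdc_lt_one (a / 2)
        have h2 := vdc_nonneg (b / 2)
        rw [vdc_rec a, vdc_rec b, ha, hb]
        push_cast
        intro e
        linarith
      rcases Nat.mod_two_eq_zero_or_one n with h1 | h1 <;>
        rcases Nat.mod_two_eq_zero_or_one m with h2 | h2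
      · exact hp (h1.trans h2.symm)
      · exact key n m h1 h2 h
      · exact key m n h2 h1 h.symm
      · exact hp (h1.trans h2.symm)
    have hhalf : vdc 2 (n / 2) = vdc 2 (m / 2) := by
      rw [vdc_rec n, vdc_rec m, hpar] at h
      linarith
    have := ih (n / 2) (Nat.div_lt_self hn (by norm_num)) hhalf
    omega

lemma nid_nonneg (x : ℝ) : 0 ≤ nid x := abs_nonneg _

lemma nid_le_abs (x : ℝ) : nid x ≤ |x| := by
  have := round_le x 0
  simpa [nid] using this

lemma nid_lower (j : ℤ) (L : ℕ) (hj : ¬ ((2 : ℤ) ^ L ∣ j)) :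
    1 / (2 : ℝ) ^ L ≤ nid ((j : ℝ) / 2 ^ L) := by
  set r := round ((j : ℝ) / 2 ^ L) with hr
  have hne : j - r * 2 ^ L ≠ 0 := by
    intro h
    exact hj ⟨r, by linarith⟩
  have h1 : (1 : ℝ) ≤ |((j - r * 2 ^ L : ℤ) : ℝ)| := by
    exact_mod_cast Int.one_le_abs hne
  have hL : (0 : ℝ) < 2 ^ L := by positivity
  have heq : nid ((j : ℝ) / 2 ^ L) = |((j - r * 2 ^ L : ℤ) : ℝ)| / 2 ^ L := by
    rw [nid, ← hr, ← abs_of_pos hL, ← abs_div]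
    congr 1
    push_cast
    field_simp
    simp only [abs_of_pos hL]
  rw [heq]
  exact div_le_div_of_nonneg_right h1 hL.le

lemma vdc_two_pow (k : ℕ) : vdc 2 (2 ^ k) = 1 / 2 ^ (k + 1) := by
  induction k with
  | zero =>
    rw [pow_zero, vdc_rec 1]
    norm_num [vdc_zero]
  | succ k ih =>
    rw [vdc_rec (2 ^ (k + 1))]
    have h1 : 2 ^ (k + 1) % 2 = 0 := by
      simp [pow_succ, Nat.mul_mod_left]
    have h2 : 2 ^ (k + 1) / 2 = 2 ^ k := by
      rw [pow_succ]; exact Nat.mul_div_cancel _ (by norm_num)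
    rw [h1, h2, ih]
    push_cast
    rw [pow_succ]
    ring

theorem stmt10 (N : ℕ) (hN : 2 ≤ N) :
    1 / (2 * (N : ℝ)) ≤ minGap (vdc 2) N ∧ minGap (vdc 2) N ≤ 1 / (N : ℝ) := by
  have hNR : (0 : ℝ) < N := by positivity
  set S := {r | ∃ m n, 1 ≤ m ∧ m ≤ N ∧ 1 ≤ n ∧ n ≤ N ∧ m ≠ n ∧ r = nid (vdc 2 n - vdc 2 m)} with hS
  set k := Nat.log 2 N with hk
  have hk1 : 1 ≤ k := Nat.le_log_of_pow_le (by norm_num) (by simpa using hN)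
  have hkN : 2 ^ k ≤ N := Nat.pow_log_le_self 2 (by omega)
  have hNk : N < 2 ^ (k + 1) := Nat.lt_pow_succ_log_self (by norm_num) N
  -- nonempty witness for sInf, also giving the upper bound
  have hmem : nid (vdc 2 (2 ^ k) - vdc 2 (2 ^ (k - 1))) ∈ S := by
    refine ⟨2 ^ (k - 1), 2 ^ k, Nat.one_le_two_pow, ?_, Nat.one_le_two_pow, hkN, ?_, rfl⟩
    · exact le_trans (Nat.pow_le_pow_right (by norm_num) (Nat.sub_le k 1)) hkN
    · have : 2 ^ (k - 1) < 2 ^ k := Nat.pow_lt_pow_right (by norm_num) (by omega)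
      omega
  have hSne : S.Nonempty := ⟨_, hmem⟩
  -- lower bound on all elements
  have hlow : ∀ r ∈ S, 1 / (2 * (N : ℝ)) ≤ r := by
    rintro r ⟨m, n, hm1, hmN, hn1, hnN, hne, rfl⟩
    set L := k + 1 with hL
    have hnL : n < 2 ^ L := lt_of_le_of_lt hnN hNk
    have hmL : m < 2 ^ L := lt_of_le_of_lt hmN hNk
    obtain ⟨a, haL, hva⟩ := vdc_repr L n hnL
    obtain ⟨c, hcL, hvc⟩ := vdc_repr L m hmL
    have hac : a ≠ c := by
      intro e
      apply hne
      exact (vdc_injective (by rw [hva, hvc, e])).symm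
    have hdiff : vdc 2 n - vdc 2 m = (((a : ℤ) - c : ℤ) : ℝ) / 2 ^ L := by
      rw [hva, hvc]
      push_cast
      ring
    have hdvd : ¬ ((2 : ℤ) ^ L ∣ ((a : ℤ) - c)) := by
      intro hd
      have haL' : (a : ℤ) < (2 : ℤ) ^ L := by exact_mod_cast haL
      have hcL' : (c : ℤ) < (2 : ℤ) ^ L := by exact_mod_cast hcL
      have hlt : |((a : ℤ) - c)| < 2 ^ L := by
        rw [abs_sub_lt_iff]
        constructor <;> [linarith [Int.ofNat_nonneg c]; linarith [Int.ofNat_nonneg a]]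
      have hne0 : ((a : ℤ) - c) ≠ 0 := by
        intro e
        apply hac
        omega
      have := Int.le_of_dvd (abs_pos.2 hne0) ((dvd_abs _ _).2 hd)
      exact absurd this (not_le.2 hlt)
    have h1 : 1 / (2 : ℝ) ^ L ≤ nid (vdc 2 n - vdc 2 m) := by
      rw [hdiff]
      exact nid_lower _ _ hdvd
    refine le_trans ?_ h1
    apply one_div_le_one_div_of_le (by positivity)
    have : (2 : ℝ) ^ L = 2 * (2 : ℝ) ^ k := by rw [hL, pow_succ]; ring
    rw [this]
    have : (2 : ℝ) ^ k ≤ N := by exact_mod_cast hkN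
    linarith
  constructor
  · exact le_csInf hSne hlow
  · have hbdd : BddBelow S := ⟨0, fun r ⟨m, n, _, _, _, _, _, hr⟩ => hr ▸ nid_nonneg _⟩
    have hle : nid (vdc 2 (2 ^ k) - vdc 2 (2 ^ (k - 1))) ≤ 1 / (N : ℝ) := by
      rw [vdc_two_pow, vdc_two_pow]
      have hkk : k - 1 + 1 = k := by omega
      rw [hkk]
      calc nid (1 / 2 ^ (k + 1) - 1 / 2 ^ k) ≤ |1 / (2:ℝ) ^ (k + 1) - 1 / 2 ^ k| := nid_le_abs _
        _ = 1 / 2 ^ (k + 1) := by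
            rw [abs_of_nonpos (by
              apply sub_nonpos.2
              apply one_div_le_one_div_of_le (by positivity)
              exact pow_le_pow_right₀ (by norm_num) (by omega))]
            rw [pow_succ]
            ring
        _ ≤ 1 / (N : ℝ) := by
            apply one_div_le_one_div_of_le hNR
            exact_mod_cast hNk.le
    exact le_trans (csInf_le hbdd hmem) hle
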